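/- Let B be a bi-gyrogroupoid such that for all a,b: (i) lgyr[a,b] and rgyr[a,b] commute; (ii) lgyr[a,b]⁻¹ = lgyr[⊖b,⊖a] and rgyr[a,b]⁻¹ = rgyr[⊖b,⊖a]; (iii) ⊖(a⊕b) = (lgyr[a,b]∘rgyr[a,b])(⊖b⊖a). If B is bi-gyrocommutative (a⊕b = (lgyr[a,b]∘rgyr[a,b])(b⊕a) for all a,b), then B has the automorphic inverse property ⊖(a⊕b) = ⊖a⊕⊖b. Conversely, if B satisfies the bi-gyration inversion law lgyr[a,b]⁻¹ = lgyr[b,a], rgyr[a,b]⁻¹ = rgyr[b,a] and the automorphic inverse property, then B is bi-gyrocommutative. -/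

import Mathlib

/-- A bi-gyrogroupoid: a set `β` with a binary operation `add`, an identity `zero`,
and two families of gyrations `lgyr`, `rgyr` satisfying axioms (BG1)–(BG5). -/
structure IsBiGyrogroupoid {β : Type*} (add : β → β → β) (zero : β)
    (lgyr rgyr : β → β → β → β) : Prop where
  /-- (BG1) `zero` is a two-sided identity. -/
  zero_add : ∀ a, add zero a = a
  add_zero : ∀ a, add a zero = a
  /-- (BG2) every element has a left inverse. -/
  exists_left_inv : ∀ a, ∃ b, add b a = zero
  /-- (BG3) gyrations are automorphisms of `(β, add)`. -/
  lgyr_bijective : ∀ a b, Function.Bijective (lgyr a b)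
  rgyr_bijective : ∀ a b, Function.Bijective (rgyr a b)
  lgyr_add : ∀ a b x y, lgyr a b (add x y) = add (lgyr a b x) (lgyr a b y)
  rgyr_add : ∀ a b x y, rgyr a b (add x y) = add (rgyr a b x) (rgyr a b y)
  /-- (BG3) the bi-gyroassociative law. -/
  bgassoc : ∀ a b c, add (add a b) (lgyr a b c) = add (rgyr b c a) (add b c)
  /-- (BG4a) -/
  rgyr_red : ∀ a b, rgyr a b = rgyr (lgyr a b a) (add a b)
  /-- (BG4b) -/
  lgyr_red : ∀ a b, lgyr a b = lgyr (lgyr a b a) (add a b)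
  /-- (BG5) -/
  lgyr_zero : ∀ a, lgyr a zero = id
  rgyr_zero : ∀ a, rgyr a zero = id

/-! Bi-gyrocommutativity applied to `⊖b ⊕ ⊖a` turns (iii) into
`⊖(a ⊕ b) = (lgyr[a,b] ∘ rgyr[a,b] ∘ lgyr[⊖b,⊖a] ∘ rgyr[⊖b,⊖a])(⊖a ⊖ b)`, and (i), (ii) cancel the
four gyrations. Conversely, gyrations are automorphisms and inverses are unique, so gyrations
commute with `⊖`; the automorphic inverse property rewrites (iii) as
`⊖(a ⊕ b) = ⊖((lgyr[a,b] ∘ rgyr[a,b])(b ⊕ a))`, and `⊖` is injective. -/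

namespace IsBiGyrogroupoid

variable {β : Type*} {add : β → β → β} {zero : β} {lgyr rgyr : β → β → β → β}
  (h : IsBiGyrogroupoid add zero lgyr rgyr)
include h

theorem lgyr_eq_id_of_add_eq_zero {a b : β} (hab : add a b = zero) : lgyr a b = id := by
  rw [h.lgyr_red, hab, h.lgyr_zero]

theorem rgyr_eq_id_of_add_eq_zero {a b : β} (hab : add a b = zero) : rgyr a b = id := by
  rw [h.rgyr_red, hab, h.rgyr_zero]

theorem add_rgyr_add_of_add_eq_zero {a b : β} (hba : add b a = zero) (c : β) :
    add (rgyr a c b) (add a c) = c := by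
  rw [← h.bgassoc, hba, h.zero_add, h.lgyr_eq_id_of_add_eq_zero hba, id]

theorem eq_of_add_eq_zero_of_add_eq_zero {a b c : β} (hba : add b a = zero)
    (hac : add a c = zero) : c = b := by
  have := h.add_rgyr_add_of_add_eq_zero hba c
  rwa [hac, h.add_zero, h.rgyr_eq_id_of_add_eq_zero hac, id, eq_comm] at this

theorem map_zero_of_surjective {f : β → β} (hf : Function.Surjective f)
    (hadd : ∀ x y, f (add x y) = add (f x) (f y)) : f zero = zero := by
  obtain ⟨w, hw⟩ := hf zero
  have := hadd w zero
  rwa [h.add_zero, hw, h.zero_add, eq_comm] at this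

section Neg

variable {neg : β → β}

theorem neg_neg (hneg : ∀ a, add (neg a) a = zero) (a : β) : neg (neg a) = a :=
  (h.eq_of_add_eq_zero_of_add_eq_zero (hneg (neg a)) (hneg a)).symm

theorem neg_injective (hneg : ∀ a, add (neg a) a = zero) : Function.Injective neg :=
  Function.LeftInverse.injective (h.neg_neg hneg)

theorem map_neg_of_surjective (hneg : ∀ a, add (neg a) a = zero ∧ add a (neg a) = zero)
    {f : β → β} (hf : Function.Surjective f) (hadd : ∀ x y, f (add x y) = add (f x) (f y))
    (x : β) : f (neg x) = neg (f x) :=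
  h.eq_of_add_eq_zero_of_add_eq_zero (hneg (f x)).1 <| by
    rw [← hadd, (hneg x).2, h.map_zero_of_surjective hf hadd]

theorem lgyr_neg (hneg : ∀ a, add (neg a) a = zero ∧ add a (neg a) = zero) (a b x : β) :
    lgyr a b (neg x) = neg (lgyr a b x) :=
  h.map_neg_of_surjective hneg (h.lgyr_bijective a b).2 (h.lgyr_add a b) x

theorem rgyr_neg (hneg : ∀ a, add (neg a) a = zero ∧ add a (neg a) = zero) (a b x : β) :
    rgyr a b (neg x) = neg (rgyr a b x) :=
  h.map_neg_of_surjective hneg (h.rgyr_bijective a b).2 (h.rgyr_add a b) x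

end Neg

end IsBiGyrogroupoid

/-- Under hypotheses (i)–(iii), bi-gyrocommutativity implies the automorphic inverse
property; conversely, under the bi-gyration inversion law, the automorphic inverse
property implies bi-gyrocommutativity. -/
theorem biGyrogroupoid_bigyrocomm_iff_aip {β : Type*} (add : β → β → β) (zero : β)
    (lgyr rgyr : β → β → β → β) (neg : β → β)
    (h : IsBiGyrogroupoid add zero lgyr rgyr)
    (hneg : ∀ a, add (neg a) a = zero ∧ add a (neg a) = zero)
    (h1 : ∀ a b x, lgyr a b (rgyr a b x) = rgyr a b (lgyr a b x))
    (h2 : ∀ a b x, (lgyr (neg b) (neg a) (lgyr a b x) = x ∧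
        lgyr a b (lgyr (neg b) (neg a) x) = x) ∧
      (rgyr (neg b) (neg a) (rgyr a b x) = x ∧
        rgyr a b (rgyr (neg b) (neg a) x) = x))
    (h3 : ∀ a b, neg (add a b) = lgyr a b (rgyr a b (add (neg b) (neg a)))) :
    ((∀ a b, add a b = lgyr a b (rgyr a b (add b a))) →
      (∀ a b, neg (add a b) = add (neg a) (neg b))) ∧
    ((∀ a b x, (lgyr b a (lgyr a b x) = x ∧ lgyr a b (lgyr b a x) = x) ∧
        (rgyr b a (rgyr a b x) = x ∧ rgyr a b (rgyr b a x) = x)) →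
      (∀ a b, neg (add a b) = add (neg a) (neg b)) →
      (∀ a b, add a b = lgyr a b (rgyr a b (add b a)))) := by
  constructor
  · intro hcomm a b
    rw [h3, hcomm (neg b) (neg a), h1 (neg b) (neg a), (h2 a b _).2.2, (h2 a b _).1.2]
  · intro _ haip a b
    apply h.neg_injective fun a => (hneg a).1
    rw [h3, ← haip b a, h.rgyr_neg hneg, h.lgyr_neg hneg]
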